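/- arXiv:1108.0467 — 6 statements merged into one kernel-verified Lean document; each statement's English description precedes it below -/
import Mathlib

section
/- Let S be a finitely branching synchronous system. For all states p and q, the inductively defined relation p ≁ q holds if and only if p and q are not bisimilar. -/
/-- A synchronous system over input set `In` and output set `Out`,
with state set `Q`, transition relation `E` and output function `out`. -/
structure SyncSys (In : Type*) (Out : Type*) (Q : Type*) where
  E : Q → In → Q → Prop
  out : Q → Out

namespace SyncSys

variable {In Out Q : Type*}

/-- A system is complete if every state has a successor on every input. -/
def Complete (S : SyncSys In Out Q) : Prop := ∀ p a, ∃ q, S.E p a q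

/-- A system is finitely branching if every state has finitely many successors on each input. -/
def FinBranch (S : SyncSys In Out Q) : Prop := ∀ p a, {q | S.E p a q}.Finite

/-- `R` is a bisimulation on the states of `S`. -/
def IsBisimulation (S : SyncSys In Out Q) (R : Q → Q → Prop) : Prop :=
  ∀ p q, R p q → S.out p = S.out q ∧
    (∀ a p', S.E p a p' → ∃ q', S.E q a q' ∧ R p' q') ∧
    (∀ a q', S.E q a q' → ∃ p', S.E p a p' ∧ R p' q')

/-- `p` and `q` are bisimilar: they are related by some bisimulation. -/
def Bisim (S : SyncSys In Out Q) (p q : Q) : Prop :=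
  ∃ R, IsBisimulation S R ∧ R p q

/-- `IsRun S q w qs`: `qs` is a run on the finite input word `w` starting from `q`
(the list `qs` is the sequence of states `q₀, q₁, …, qₙ`, with `q₀ = q`). -/
inductive IsRun (S : SyncSys In Out Q) : Q → List In → List Q → Prop
  | nil (q : Q) : IsRun S q [] [q]
  | cons {q q' : Q} {a : In} {w : List In} {qs : List Q} :
      S.E q a q' → IsRun S q' w qs → IsRun S q (a :: w) (q :: qs)

/-- The output language of `S` at `q` on the input word `w`:
the output words of all runs on `w` from `q`. -/
def lang (S : SyncSys In Out Q) (q : Q) (w : List In) : Set (List Out) :=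
  { o | ∃ qs, IsRun S q w qs ∧ o = qs.map S.out }

/-- `(a₁, a₂)` is a separating pair of state `q`. -/
def SepPair (S : SyncSys In Out Q) (a₁ a₂ : In) (q : Q) : Prop :=
  a₁ ≠ a₂ ∧ ∃ q₁, S.E q a₁ q₁ ∧ ∀ q₂, S.E q a₂ q₂ → ¬ Bisim S q₁ q₂

/-- A state is reactive if it has a separating pair. -/
def Reactive (S : SyncSys In Out Q) (q : Q) : Prop := ∃ a₁ a₂, SepPair S a₁ a₂ q

/-- `(a₁, a₂)` is a strongly separating pair of the pair of states `(q₁, q₂)`. -/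
def SSP (S : SyncSys In Out Q) (a₁ a₂ : In) (q₁ q₂ : Q) : Prop :=
  a₁ ≠ a₂ ∧
    ((∃ q₁', S.E q₁ a₁ q₁' ∧ ∀ q₂', S.E q₂ a₂ q₂' → ¬ Bisim S q₁' q₂') ∨
     (∃ q₁', S.E q₁ a₂ q₁' ∧ ∀ q₂', S.E q₂ a₁ q₂' → ¬ Bisim S q₁' q₂'))

/-- Sequential composition `S_g ∘ S_f` of `S_f : (A, B)` and `S_g : (B, C)`. -/
def seqComp {A B C Qf Qg : Type*} (Sf : SyncSys A B Qf) (Sg : SyncSys B C Qg) :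
    SyncSys A C (Qf × Qg) where
  E := fun pq a pq' => Sf.E pq.1 a pq'.1 ∧ Sg.E pq.2 (Sf.out pq.1) pq'.2
  out := fun pq => Sg.out pq.2

/-- Parallel composition `S_f ∥ S_g` of `S_f : (A, B)` and `S_g : (C, D)`. -/
def parComp {A B C D Qf Qg : Type*} (Sf : SyncSys A B Qf) (Sg : SyncSys C D Qg) :
    SyncSys (A × C) (B × D) (Qf × Qg) where
  E := fun pq ac pq' => Sf.E pq.1 ac.1 pq'.1 ∧ Sg.E pq.2 ac.2 pq'.2
  out := fun pq => (Sf.out pq.1, Sg.out pq.2)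

end SyncSys

namespace SyncSys

/-- The inductively defined non-bisimilarity relation `p ≁ q`. -/
inductive NotBisim {In Out Q : Type*} (S : SyncSys In Out Q) : Q → Q → Prop
  | base {p q : Q} : S.out p ≠ S.out q → NotBisim S p q
  | indl {p q : Q} {a : In} {p' : Q} :
      S.E p a p' → (∀ q', S.E q a q' → NotBisim S p' q') → NotBisim S p q
  | indr {p q : Q} {a : In} {q' : Q} :
      S.E q a q' → (∀ p', S.E p a p' → NotBisim S p' q') → NotBisim S p q

end SyncSys

namespace SyncSys

variable {In Out Q : Type*} {S : SyncSys In Out Q}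

theorem IsBisimulation.not_notBisim {R : Q → Q → Prop} (hR : IsBisimulation S R) {p q : Q}
    (h : NotBisim S p q) : ¬ R p q := by
  induction h with
  | base hne => exact fun hpq => hne (hR _ _ hpq).1
  | indl hE _ ih =>
    intro hpq
    obtain ⟨q', hq', hRq'⟩ := (hR _ _ hpq).2.1 _ _ hE
    exact ih q' hq' hRq'
  | indr hE _ ih =>
    intro hpq
    obtain ⟨p', hp', hRp'⟩ := (hR _ _ hpq).2.2 _ _ hE
    exact ih p' hp' hRp'

theorem NotBisim.not_bisim {p q : Q} (h : NotBisim S p q) : ¬ Bisim S p q :=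
  fun ⟨_, hR, hpq⟩ => hR.not_notBisim h hpq

/-- Each clause of a bisimulation failing at `(p, q)` is exactly a rule deriving `p ≁ q`. -/
theorem isBisimulation_not_notBisim : IsBisimulation S fun p q => ¬ NotBisim S p q := by
  intro p q hpq
  refine ⟨?_, ?_, ?_⟩
  · by_contra hne
    exact hpq (.base hne)
  · intro a p' hE
    by_contra! hall
    exact hpq (.indl hE hall)
  · intro a q' hE
    by_contra! hall
    exact hpq (.indr hE hall)

theorem bisim_of_not_notBisim {p q : Q} (h : ¬ NotBisim S p q) : Bisim S p q :=
  ⟨_, isBisimulation_not_notBisim, h⟩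

end SyncSys

open SyncSys in
theorem notBisim_iff_not_bisim_general {In Out Q : Type*} (S : SyncSys In Out Q)
    (p q : Q) :
    NotBisim S p q ↔ ¬ Bisim S p q :=
  ⟨NotBisim.not_bisim, not_imp_comm.mp bisim_of_not_notBisim⟩

open SyncSys in
/-- for finitely branching systems, the inductive relation `≁`
coincides with the negation of bisimilarity. -/
theorem notBisim_iff_not_bisim {In Out Q : Type*} (S : SyncSys In Out Q)
    (hfb : S.FinBranch) (p q : Q) :
    NotBisim S p q ↔ ¬ Bisim S p q :=
  notBisim_iff_not_bisim_general S p q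
end

section
/- Let S be a complete synchronous system. If states p and q are not bisimilar, then there exist a finite input word w, a run on w from p, and a run on w from q whose output words differ (i.e., a separator of p and q exists). -/
open SyncSys in
/-- in a complete system, non-bisimilar states have a separator:
a finite input word with runs from each state whose output words differ. -/
theorem separator_of_not_bisim {In Out Q : Type*} (S : SyncSys In Out Q)
    (hc : S.Complete) (p q : Q) (h : ¬ Bisim S p q) :
    ∃ (w : List In) (qs₁ qs₂ : List Q),
      IsRun S p w qs₁ ∧ IsRun S q w qs₂ ∧ qs₁.map S.out ≠ qs₂.map S.out := by
  by_contra hsep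
  push_neg at hsep
  apply h
  refine ⟨fun x y => ∀ w qs₁ qs₂, IsRun S x w qs₁ → IsRun S y w qs₂ →
    qs₁.map S.out = qs₂.map S.out, ?_, ?_⟩
  · intro x y hR
    have hout : S.out x = S.out y := by
      have := hR [] [x] [y] (IsRun.nil x) (IsRun.nil y)
      simpa using this
    refine ⟨hout, ?_, ?_⟩
    · intro a p' hE
      obtain ⟨q', hE'⟩ := hc y a
      refine ⟨q', hE', fun w qs₁ qs₂ h₁ h₂ => ?_⟩
      have := hR (a :: w) (x :: qs₁) (y :: qs₂) (IsRun.cons hE h₁) (IsRun.cons hE' h₂)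
      simpa using (List.cons.injEq _ _ _ _ ▸ this).2
    · intro a q' hE'
      obtain ⟨p', hE⟩ := hc x a
      refine ⟨p', hE, fun w qs₁ qs₂ h₁ h₂ => ?_⟩
      have := hR (a :: w) (x :: qs₁) (y :: qs₂) (IsRun.cons hE h₁) (IsRun.cons hE' h₂)
      simpa using (List.cons.injEq _ _ _ _ ▸ this).2
  · intro w qs₁ qs₂ h₁ h₂
    exact hsep w qs₁ qs₂ h₁ h₂
end

section
/- Reactivity is not preserved by sequential composition: there exist two-element sets A, B, C, a complete finitely branching synchronous system S_f over (A, B) with a state p, and a complete finitely branching synchronous system S_g over (B, C) with a state q, such that p is reactive in S_f and q is reactive in S_g, but the state (p, q) is not reactive in the sequential composition S_g ∘ S_f. -/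
open SyncSys

/-- Both example systems have the same transition relation on `Fin 3`:
state 0 goes to 1 on `true` and to 2 on `false`; states 1 and 2 loop. -/
def exE : Fin 3 → Bool → Fin 3 → Prop :=
  fun s a s' => if s = 0 then s' = (if a then 1 else 2) else s' = s

def exSys : SyncSys Bool Bool (Fin 3) where
  E := exE
  out := fun s => decide (s ≠ 2)

lemma exSys_complete : exSys.Complete := by
  intro p a
  refine ⟨if p = 0 then (if a then 1 else 2) else p, ?_⟩
  show exE p a _
  unfold exE
  split <;> simp_all

lemma exSys_finbranch : exSys.FinBranch := fun p a => Set.toFinite _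

lemma exE_zero {a : Bool} {s' : Fin 3} (h : exE 0 a s') : s' = (if a then 1 else 2) := by
  simpa [exE] using h

lemma exE_nonzero {s s' : Fin 3} {a : Bool} (hs : s ≠ 0) (h : exE s a s') : s' = s := by
  simpa [exE, hs] using h

lemma exE_loop {s : Fin 3} (hs : s ≠ 0) (a : Bool) : exE s a s := by
  simp [exE, hs]

lemma exSys_reactive : Reactive exSys (0 : Fin 3) := by
  refine ⟨true, false, by decide, 1, ?_, ?_⟩
  · show exE 0 true 1; simp [exE]
  · intro q2 hq2 hbis
    have hq2' : q2 = 2 := by simpa using exE_zero hq2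
    subst hq2'
    obtain ⟨R, hR, h12⟩ := hbis
    have := (hR 1 2 h12).1
    simp [exSys] at this

open SyncSys in
lemma comp_bisim {x y : Fin 3} (hx : x ≠ 0) (hy : y ≠ 0) :
    Bisim (seqComp exSys exSys) (x, 1) (y, 1) := by
  refine ⟨fun u v => u.1 ≠ 0 ∧ v.1 ≠ 0 ∧ u.2 = 1 ∧ v.2 = 1, ?_, hx, hy, rfl, rfl⟩
  rintro ⟨u1, u2⟩ ⟨v1, v2⟩ ⟨hu1, hv1, hu2, hv2⟩
  subst hu2; subst hv2
  refine ⟨rfl, ?_, ?_⟩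
  · rintro a ⟨p', q'⟩ ⟨h1, h2⟩
    have hp' : p' = u1 := exE_nonzero hu1 h1
    have hq' : q' = 1 := exE_nonzero (a := exSys.out (u1, 1).1) (by decide) h2
    subst hp'; subst hq'
    exact ⟨(v1, 1), ⟨exE_loop hv1 a, exE_loop (show (1:Fin 3) ≠ 0 by decide) (exSys.out v1)⟩, hu1, hv1, rfl, rfl⟩
  · rintro a ⟨p', q'⟩ ⟨h1, h2⟩
    have hp' : p' = v1 := exE_nonzero hv1 h1
    have hq' : q' = 1 := exE_nonzero (a := exSys.out (v1, 1).1) (by decide) h2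
    subst hp'; subst hq'
    exact ⟨(u1, 1), ⟨exE_loop hu1 a, exE_loop (show (1:Fin 3) ≠ 0 by decide) (exSys.out u1)⟩, hu1, hv1, rfl, rfl⟩

open SyncSys in
/-- reactivity is not preserved by sequential composition. -/
theorem reactivity_not_compositional :
    ∃ (A B C : Type), Nat.card A = 2 ∧ Nat.card B = 2 ∧ Nat.card C = 2 ∧
      ∃ (Qf Qg : Type) (Sf : SyncSys A B Qf) (Sg : SyncSys B C Qg) (p : Qf) (q : Qg),
        Sf.Complete ∧ Sf.FinBranch ∧ Sg.Complete ∧ Sg.FinBranch ∧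
        Reactive Sf p ∧ Reactive Sg q ∧ ¬ Reactive (seqComp Sf Sg) (p, q) := by
  refine ⟨Bool, Bool, Bool, by simp, by simp, by simp,
    Fin 3, Fin 3, exSys, exSys, 0, 0,
    exSys_complete, exSys_finbranch, exSys_complete, exSys_finbranch,
    exSys_reactive, exSys_reactive, ?_⟩
  rintro ⟨a1, a2, hne, ⟨x1, x2⟩, ⟨hx1, hx2⟩, hall⟩
  have hx1' : x1 = (if a1 then 1 else 2) := exE_zero hx1
  have hx2' : x2 = 1 := by
    have : exSys.out (0 : Fin 3) = true := by decide
    rw [this] at hx2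
    simpa using exE_zero hx2
  subst hx1'; subst hx2'
  refine hall ((if a2 then 1 else 2), 1) ⟨?_, ?_⟩ ?_
  · show exE 0 a2 _; simp [exE]
  · show exE 0 (exSys.out (0 : Fin 3)) 1
    have : exSys.out (0 : Fin 3) = true := by decide
    rw [this]; show exE 0 true 1; simp [exE]
  · exact comp_bisim (by split <;> decide) (by split <;> decide)
end

section
/- Parallel composition does not alter the reactivity of the sub-components: let S_f be a complete synchronous system over (A, B) and S_g a complete synchronous system over (C, D) with C nonempty. If a state p of S_f is reactive, then for every state q of S_g the state (p, q) is reactive in the parallel composition S_f ∥ S_g. -/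
open SyncSys in
lemma bisim_isBisim {In Out Q : Type*} (S : SyncSys In Out Q) :
    IsBisimulation S (Bisim S) := by
  intro p q ⟨R, hR, hpq⟩
  obtain ⟨ho, h1, h2⟩ := hR p q hpq
  refine ⟨ho, ?_, ?_⟩
  · intro a p' hp'
    obtain ⟨q', hq', hrel⟩ := h1 a p' hp'
    exact ⟨q', hq', R, hR, hrel⟩
  · intro a q' hq'
    obtain ⟨p', hp', hrel⟩ := h2 a q' hq'
    exact ⟨p', hp', R, hR, hrel⟩

open SyncSys in
lemma bisim_proj {A B C D Qf Qg : Type*}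
    (Sf : SyncSys A B Qf) (Sg : SyncSys C D Qg)
    (hgc : Sg.Complete) [Nonempty C]
    {p₁ p₂ : Qf} {q₁ q₂ : Qg}
    (h : Bisim (parComp Sf Sg) (p₁, q₁) (p₂, q₂)) : Bisim Sf p₁ p₂ := by
  refine ⟨fun x y => ∃ u v, Bisim (parComp Sf Sg) (x, u) (y, v), ?_, q₁, q₂, h⟩
  intro x y ⟨u, v, hb⟩
  obtain ⟨ho, h1, h2⟩ := bisim_isBisim (parComp Sf Sg) _ _ hb
  obtain ⟨c⟩ := ‹Nonempty C›
  refine ⟨congrArg Prod.fst ho, ?_, ?_⟩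
  · intro a x' hx'
    obtain ⟨u', hu'⟩ := hgc u c
    obtain ⟨⟨y', v'⟩, hy', hrel⟩ := h1 (a, c) (x', u') ⟨hx', hu'⟩
    exact ⟨y', hy'.1, u', v', hrel⟩
  · intro a y' hy'
    obtain ⟨v', hv'⟩ := hgc v c
    obtain ⟨⟨x', u'⟩, hx', hrel⟩ := h2 (a, c) (y', v') ⟨hy', hv'⟩
    exact ⟨x', hx'.1, u', v', hrel⟩

open SyncSys in
/-- parallel composition does not alter reactivity of the
sub-components. -/
theorem parComp_reactive {A B C D Qf Qg : Type*}
    (Sf : SyncSys A B Qf) (Sg : SyncSys C D Qg)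
    (hfc : Sf.Complete) (hgc : Sg.Complete) [Nonempty C]
    (p : Qf) (hp : Reactive Sf p) :
    ∀ q : Qg, Reactive (parComp Sf Sg) (p, q) := by
  intro q
  obtain ⟨a₁, a₂, hne, p₁, hp₁, hsep⟩ := hp
  obtain ⟨c⟩ := ‹Nonempty C›
  obtain ⟨q₁, hq₁⟩ := hgc q c
  refine ⟨(a₁, c), (a₂, c), fun h => hne (congrArg Prod.fst h), (p₁, q₁), ⟨hp₁, hq₁⟩, ?_⟩
  rintro ⟨p₂, q₂⟩ ⟨hp₂, hq₂⟩ hbis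
  exact hsep p₂ hp₂ (bisim_proj Sf Sg hgc hbis)
end

section
/- Consider the synchronous system over inputs Bool and outputs Bool with states {p₀, p₁, p₂}, outputs out(p₀) = out(p₁) = false and out(p₂) = true, and transitions p₀ →[true] p₁, p₀ →[false] p₀, p₁ →[true] p₁, p₁ →[false] p₂, p₂ →[true] p₁, p₂ →[false] p₀ (a complete deterministic system). Then: (a) p₀ and p₁ are not bisimilar, hence (true, false) is a separating pair of p₀ and p₀ is reactive; (b) for every natural number n, the unique runs from p₀ and from p₁ on the word consisting of n copies of true have equal output words (so no prefix of the constant-true infinite input word produces an observable difference between p₀ and p₁). -/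
namespace Stmt14

/-- The three states of the example system. -/
inductive St : Type
  | p0 | p1 | p2
  deriving DecidableEq

open St

/-- The (deterministic) transition function of the example system. -/
def step : St → Bool → St
  | p0, true => p1
  | p0, false => p0
  | p1, true => p1
  | p1, false => p2
  | p2, true => p1
  | p2, false => p0

/-- The output function: `true` exactly on `p₂`. -/
def outFn : St → Bool
  | p2 => true
  | _ => false

/-- The example synchronous system over inputs `Bool` and outputs `Bool`. -/
def Sys : SyncSys Bool Bool St where
  E := fun p a q => step p a = q
  out := outFn

open SyncSys in
lemma not_bisim_p0_p1 : ¬ Bisim Sys p0 p1 := by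
  rintro ⟨R, hR, h01⟩
  obtain ⟨-, hfwd, -⟩ := hR p0 p1 h01
  obtain ⟨q', hq', hRq⟩ := hfwd false p0 rfl
  have : q' = p2 := hq'.symm
  subst this
  exact absurd (hR p0 p2 hRq).1 (by decide)

open SyncSys in
lemma not_bisim_p1_p0 : ¬ Bisim Sys p1 p0 := by
  rintro ⟨R, hR, h10⟩
  obtain ⟨-, hfwd, -⟩ := hR p1 p0 h10
  obtain ⟨q', hq', hRq⟩ := hfwd false p2 rfl
  have : q' = p0 := hq'.symm
  subst this
  exact absurd (hR p2 p0 hRq).1 (by decide)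

open SyncSys in
lemma run_p1_true (n : ℕ) (qs : List St) (h : IsRun Sys p1 (List.replicate n true) qs) :
    qs.map Sys.out = List.replicate (n + 1) false := by
  induction n generalizing qs with
  | zero => cases h; rfl
  | succ n ih =>
    rw [List.replicate_succ] at h
    cases h with
    | cons hE hrun =>
      rename_i q' qs'
      have : q' = p1 := hE.symm
      subst this
      simp [ih _ hrun, List.replicate_succ]
      rfl

open SyncSys in
/-- (a) `p₀ ≁ p₁`, `(true, false)` is a separating pair of `p₀`
and `p₀` is reactive; (b) for every `n`, the runs from `p₀` and `p₁` on the word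
of `n` copies of `true` have equal output words. -/
theorem example_reactive_but_no_diff_on_true :
    (¬ Bisim Sys p0 p1) ∧
    SepPair Sys true false p0 ∧
    Reactive Sys p0 ∧
    (∀ (n : ℕ) (qs₁ qs₂ : List St),
      IsRun Sys p0 (List.replicate n true) qs₁ →
      IsRun Sys p1 (List.replicate n true) qs₂ →
      qs₁.map Sys.out = qs₂.map Sys.out) := by
  have hsep : SepPair Sys true false p0 := by
    refine ⟨by decide, p1, rfl, ?_⟩
    rintro q₂ hq₂
    have : q₂ = p0 := hq₂.symm
    subst this
    exact not_bisim_p1_p0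
  refine ⟨not_bisim_p0_p1, hsep, ⟨true, false, hsep⟩, ?_⟩
  intro n qs₁ qs₂ h1 h2
  rw [run_p1_true n qs₂ h2]
  cases n with
  | zero => cases h1; rfl
  | succ n =>
    rw [List.replicate_succ] at h1
    cases h1 with
    | cons hE hrun =>
      rename_i q' qs'
      have : q' = p1 := hE.symm
      subst this
      simp [run_p1_true _ _ hrun, List.replicate_succ]
      rfl

end Stmt14
end

section
/- Separating pairs are not preserved under union of transition systems: there exist a complete finitely branching synchronous system, states q₁, q₂, q_u, and inputs a₁ ≠ a₂ such that out(q_u) = out(q₁) = out(q₂); for every input a and state r, q_u →[a] r holds if and only if q₁ →[a] r or q₂ →[a] r; the pair (a₁,a₂) is a separating pair of q₁ and also of q₂; yet neither (a₁,a₂) nor (a₂,a₁) is a separating pair of q_u. -/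
namespace SyncSys

variable {In Out Q : Type*} {S : SyncSys In Out Q}

theorem Bisim.refl (S : SyncSys In Out Q) (q : Q) : S.Bisim q q :=
  ⟨Eq, by
    rintro p _ rfl
    exact ⟨rfl, fun _ p' h => ⟨p', h, rfl⟩, fun _ q' h => ⟨q', h, rfl⟩⟩, rfl⟩

theorem Bisim.out_eq {p q : Q} (h : S.Bisim p q) : S.out p = S.out q :=
  let ⟨_, hR, hpq⟩ := h
  (hR p q hpq).1

theorem sepPair_of_out_ne {a₁ a₂ : In} {q r : Q} (ha : a₁ ≠ a₂) (hr : S.E q a₁ r)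
    (hout : ∀ r', S.E q a₂ r' → S.out r ≠ S.out r') : S.SepPair a₁ a₂ q :=
  ⟨ha, r, hr, fun r' hr' hbisim => hout r' hr' hbisim.out_eq⟩

theorem not_sepPair_of_succ_subset {a₁ a₂ : In} {q : Q}
    (h : ∀ r, S.E q a₁ r → S.E q a₂ r) : ¬ S.SepPair a₁ a₂ q := by
  rintro ⟨-, r, hr, hsep⟩
  exact hsep r (h r hr) (Bisim.refl S r)

end SyncSys

/-- `q₁` copies its input into the output of its successor, `q₂` negates it, and `qu` does
both nondeterministically; the sinks `sink b` keep outputting `b` forever. -/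
inductive UnionExample
  | q₁ | q₂ | qu
  | sink (b : Bool)
  deriving Fintype

namespace UnionExample

def step : UnionExample → Bool → UnionExample → Prop
  | q₁, a, r => r = sink a
  | q₂, a, r => r = sink !a
  | qu, a, r => r = sink a ∨ r = sink !a
  | sink b, _, r => r = sink b

def sys : SyncSys Bool Bool UnionExample where
  E := step
  out
    | sink b => b
    | _ => true

theorem sys_complete : sys.Complete := by
  rintro (_ | _ | _ | b) a
  exacts [⟨_, rfl⟩, ⟨_, rfl⟩, ⟨_, Or.inl rfl⟩, ⟨_, rfl⟩]

end UnionExample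

open UnionExample

open SyncSys in
/-- separating pairs are not preserved under union of transition
systems. -/
theorem sepPair_not_preserved_by_union :
    ∃ (In Out Q : Type) (S : SyncSys In Out Q) (q₁ q₂ qu : Q) (a₁ a₂ : In),
      S.Complete ∧ S.FinBranch ∧ a₁ ≠ a₂ ∧
      S.out qu = S.out q₁ ∧ S.out qu = S.out q₂ ∧
      (∀ (a : In) (r : Q), S.E qu a r ↔ (S.E q₁ a r ∨ S.E q₂ a r)) ∧
      SepPair S a₁ a₂ q₁ ∧ SepPair S a₁ a₂ q₂ ∧
      ¬ SepPair S a₁ a₂ qu ∧ ¬ SepPair S a₂ a₁ qu := by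
  refine ⟨Bool, Bool, UnionExample, sys, q₁, q₂, qu, true, false, sys_complete,
    fun _ _ => Set.toFinite _, nofun, rfl, rfl, fun _ _ => Iff.rfl, ?_, ?_, ?_, ?_⟩
  · exact sepPair_of_out_ne nofun (r := sink true) rfl
      (by rintro _ rfl; exact nofun)
  · exact sepPair_of_out_ne nofun (r := sink false) rfl
      (by rintro _ rfl; exact nofun)
  · exact not_sepPair_of_succ_subset fun _ => Or.symm
  · exact not_sepPair_of_succ_subset fun _ => Or.symm
end
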